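/- arXiv:1311.6656 — 3 statements merged into one kernel-verified Lean document; each statement's English description precedes it below -/
import Mathlib

section
/- Let T be the b-adic map on [0,1) and let R₂(t) = ⋂_N ⋃_{n≥N} ⋃_{w ∈ {0,...,b-1}^n} {x ∈ I_n(w) : |T^n x − x| < b^{-tn}}, where I_n(w) is the b-adic cylinder of order n. Then for every s > 1/(1+t), the s-dimensional Hausdorff measure of R₂(t) is zero; hence dim_H R₂(t) ≤ 1/(1+t). -/
/-!
On a cylinder `I_n(w) = [c b⁻ⁿ, (c + 1) b⁻ⁿ)` the map `Tⁿ` is `x ↦ bⁿ x - c`, so `Tⁿ x - x` is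
affine with slope `bⁿ - 1 ≥ bⁿ / 2` there, and `{x ∈ I_n(w) : |Tⁿ x - x| < b^{-tn}}` has diameter
at most `4 b^{-(1+t)n}`. The `bⁿ` sets of level `n` contribute at most `4ˢ (b^{1-(1+t)s})ⁿ` to
`∑ diamˢ`, a convergent geometric series once `s (1 + t) > 1`, and the Hausdorff–Cantelli lemma
turns this summability into `μH[s] R₂(t) = 0`.
-/

open Filter MeasureTheory

/-- The `b`-adic cylinder of order `n` determined by the digit word `w`. -/
def badicCyl (b n : ℕ) (w : Fin n → Fin b) : Set ℝ :=
  Set.Ico (∑ i : Fin n, (w i : ℝ) / (b : ℝ) ^ ((i : ℕ) + 1))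
    (∑ i : Fin n, (w i : ℝ) / (b : ℝ) ^ ((i : ℕ) + 1) + ((b : ℝ) ^ n)⁻¹)

/-- The set `R₂(t) = ⋂_N ⋃_{n ≥ N} ⋃_w {x ∈ I_n(w) : |T^n x − x| < b^{-tn}}` for the
`b`-adic map `T x = bx mod 1`. -/
def badicR2 (b : ℕ) (t : ℝ) : Set ℝ :=
  ⋂ N : ℕ, ⋃ (n : ℕ) (_ : N ≤ n) (w : Fin n → Fin b),
    {x ∈ badicCyl b n w |
      |(fun y : ℝ => Int.fract ((b : ℝ) * y))^[n] x - x| < (b : ℝ) ^ (-(t * (n : ℝ)))}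

open Metric
open scoped ENNReal Topology

/-- **Hausdorff–Cantelli lemma**. -/
theorem hausdorffMeasure_limsup_eq_zero {X : Type*} [EMetricSpace X] [MeasurableSpace X]
    [BorelSpace X] {ι : ℕ → Type*} [∀ n, Countable (ι n)] {d : ℝ} (hd : 0 < d)
    (E : ∀ n, ι n → Set X) (hsum : ∑' n, ∑' i, ediam (E n i) ^ d ≠ ∞) :
    μH[d] (⋂ N : ℕ, ⋃ (n : ℕ) (_ : N ≤ n) (i : ι n), E n i) = 0 := by
  set tail : ℕ → ℝ≥0∞ := fun N => ∑' k, ∑' i, ediam (E (k + N) i) ^ d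
  have htail : Tendsto tail atTop (𝓝 0) := ENNReal.tendsto_sum_nat_add _ hsum
  -- a single set of the `N`-th tail has `diam ^ d` at most the whole tail
  have hdiam (N k : ℕ) (i : ι (k + N)) : ediam (E (k + N) i) ≤ tail N ^ d⁻¹ := calc
    ediam (E (k + N) i) = (ediam (E (k + N) i) ^ d) ^ d⁻¹ :=
      (ENNReal.rpow_rpow_inv hd.ne' _).symm
    _ ≤ tail N ^ d⁻¹ := by
      gcongr
      exact (ENNReal.le_tsum i).trans
        (ENNReal.le_tsum (f := fun k => ∑' i, ediam (E (k + N) i) ^ d) k)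
  have hdiam_lim : Tendsto (fun N => tail N ^ d⁻¹) atTop (𝓝 0) := by
    have := ((ENNReal.continuous_rpow_const (y := d⁻¹)).tendsto 0).comp htail
    rwa [ENNReal.zero_rpow_of_pos (inv_pos.2 hd)] at this
  have hcover (N : ℕ) : (⋂ N : ℕ, ⋃ (n : ℕ) (_ : N ≤ n) (i : ι n), E n i) ⊆
      ⋃ j : Σ k, ι (k + N), E (j.1 + N) j.2 := by
    intro x hx
    obtain ⟨n, hn, i, hx⟩ : ∃ n, N ≤ n ∧ ∃ i, x ∈ E n i := by
      simpa using Set.mem_iInter.1 hx N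
    obtain ⟨k, rfl⟩ : ∃ k, n = k + N := ⟨n - N, by omega⟩
    exact Set.mem_iUnion.2 ⟨⟨k, i⟩, hx⟩
  refine nonpos_iff_eq_zero.1 ?_
  calc μH[d] (⋂ N : ℕ, ⋃ (n : ℕ) (_ : N ≤ n) (i : ι n), E n i)
      ≤ liminf (fun N => ∑' j : Σ k, ι (k + N), ediam (E (j.1 + N) j.2) ^ d) atTop :=
        Measure.hausdorffMeasure_le_liminf_tsum d _ _ hdiam_lim _
          (.of_forall fun N j => hdiam N j.1 j.2) (.of_forall hcover)
    _ = liminf tail atTop := by simp only [tail, ENNReal.tsum_sigma']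
    _ = 0 := htail.liminf_eq

theorem tsum_tsum_ediam_rpow_ne_top {X : Type*} [PseudoEMetricSpace X] {ι : ℕ → Type*}
    [∀ n, Fintype (ι n)] {E : ∀ n, ι n → Set X} {b : ℕ} {C ρ : ℝ≥0∞} {s : ℝ}
    (hcard : ∀ n, Fintype.card (ι n) ≤ b ^ n) (hC : C ≠ ∞) (hs : 0 ≤ s)
    (hρ : b * ρ ^ s < 1) (hE : ∀ n i, ediam (E n i) ≤ C * ρ ^ n) :
    ∑' n, ∑' i, ediam (E n i) ^ s ≠ ∞ := by
  have hlevel (n : ℕ) : ∑' i, ediam (E n i) ^ s ≤ C ^ s * (b * ρ ^ s) ^ n := calc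
    ∑' i, ediam (E n i) ^ s ≤ ∑ _i : ι n, (C * ρ ^ n) ^ s := by
        rw [tsum_fintype]
        exact Finset.sum_le_sum fun i _ => ENNReal.rpow_le_rpow (hE n i) hs
    _ ≤ b ^ n * (C * ρ ^ n) ^ s := by
        rw [Finset.sum_const, Finset.card_univ, nsmul_eq_mul]
        gcongr
        exact_mod_cast hcard n
    _ = C ^ s * (b * ρ ^ s) ^ n := by
        rw [ENNReal.mul_rpow_of_nonneg _ _ hs, ← ENNReal.rpow_natCast_mul, mul_comm (n : ℝ),
          ENNReal.rpow_mul_natCast]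
        ring
  refine ne_top_of_le_ne_top ?_ (ENNReal.tsum_le_tsum hlevel)
  rw [ENNReal.tsum_mul_left, ENNReal.tsum_geometric]
  exact ENNReal.mul_ne_top (ENNReal.rpow_ne_top_of_nonneg hs hC)
    (ENNReal.inv_ne_top.2 (tsub_pos_of_lt hρ).ne')

theorem dimH_le_ofReal_of_hausdorffMeasure_eq_zero {X : Type*} [EMetricSpace X]
    [MeasurableSpace X] [BorelSpace X] {s : Set X} {d : ℝ}
    (h : ∀ d' : ℝ, d < d' → μH[d'] s = 0) : dimH s ≤ ENNReal.ofReal d := by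
  refine dimH_le fun d' hd' => ?_
  rw [← ENNReal.ofReal_coe_nnreal]
  exact ENNReal.ofReal_le_ofReal (le_of_not_gt fun hlt => by simp [h _ hlt] at hd')

theorem ediam_setOf_abs_mul_sub_lt_le {k : ℝ} (hk : 0 < k) (c r : ℝ) :
    ediam {x : ℝ | |k * x - c| < r} ≤ ENNReal.ofReal (2 * r / k) := by
  have hsub : {x : ℝ | |k * x - c| < r} ⊆ Set.Ioo ((c - r) / k) ((c + r) / k) := by
    rintro x (hx : |k * x - c| < r)
    obtain ⟨h₁, h₂⟩ := abs_lt.1 hx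
    exact ⟨(div_lt_iff₀ hk).2 (by linarith), (lt_div_iff₀ hk).2 (by linarith)⟩
  calc ediam {x : ℝ | |k * x - c| < r} ≤ ediam (Set.Ioo ((c - r) / k) ((c + r) / k)) :=
        ediam_mono hsub
    _ = ENNReal.ofReal (2 * r / k) := by rw [Real.ediam_Ioo]; ring_nf

section FloorRing

variable {R : Type*} [Ring R] [LinearOrder R] [IsStrictOrderedRing R] [FloorRing R]

theorem Int.fract_intCast_mul_fract (k : ℤ) (x : R) :
    Int.fract (k * Int.fract x) = Int.fract (k * x) := by
  rw [← Int.self_sub_floor x, mul_sub, ← Int.cast_mul, Int.fract_sub_intCast]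

theorem iterate_fract_intCast_mul_succ (k : ℤ) (n : ℕ) (x : R) :
    (fun y => Int.fract ((k : R) * y))^[n + 1] x = Int.fract ((k : R) ^ (n + 1) * x) := by
  induction n with
  | zero => simp
  | succ n ih =>
    rw [Function.iterate_succ_apply', ih, ← Int.cast_pow, Int.fract_intCast_mul_fract]
    push_cast
    rw [← mul_assoc, ← pow_succ']

end FloorRing

/-- The integer with base-`b` digits `w`, so that `badicCyl b n w = [c / bⁿ, (c + 1) / bⁿ)`. -/
def badicCylIndex (b n : ℕ) (w : Fin n → Fin b) : ℕ := ∑ i : Fin n, (w i : ℕ) * b ^ (n - 1 - i)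

def badicReturnSet (b n : ℕ) (w : Fin n → Fin b) (r : ℝ) : Set ℝ :=
  {x ∈ badicCyl b n w | |(fun y : ℝ => Int.fract ((b : ℝ) * y))^[n] x - x| < r}

section Cylinder

variable {b n : ℕ}

theorem pow_mul_badicCyl_left_eq_badicCylIndex (hb : b ≠ 0) (w : Fin n → Fin b) :
    (b : ℝ) ^ n * ∑ i : Fin n, (w i : ℝ) / (b : ℝ) ^ ((i : ℕ) + 1) = badicCylIndex b n w := by
  rw [badicCylIndex, Finset.mul_sum]
  push_cast
  refine Finset.sum_congr rfl fun i _ => ?_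
  have hpow : (b : ℝ) ^ n = (b : ℝ) ^ ((i : ℕ) + 1) * (b : ℝ) ^ (n - 1 - i) := by
    rw [← pow_add]
    congr 1
    omega
  rw [hpow]
  field_simp

theorem pow_mul_mem_Ico_of_mem_badicCyl (hb : b ≠ 0) {w : Fin n → Fin b} {x : ℝ}
    (hx : x ∈ badicCyl b n w) :
    (b : ℝ) ^ n * x ∈ Set.Ico (badicCylIndex b n w : ℝ) (badicCylIndex b n w + 1) := by
  have hbn : (0 : ℝ) < (b : ℝ) ^ n := by positivity
  obtain ⟨hleft, hright⟩ := hx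
  rw [← pow_mul_badicCyl_left_eq_badicCylIndex hb w]
  refine ⟨mul_le_mul_of_nonneg_left hleft hbn.le, ?_⟩
  calc (b : ℝ) ^ n * x
      < (b : ℝ) ^ n * (∑ i : Fin n, (w i : ℝ) / (b : ℝ) ^ ((i : ℕ) + 1) + ((b : ℝ) ^ n)⁻¹) :=
        mul_lt_mul_of_pos_left hright hbn
    _ = _ := by rw [mul_add, mul_inv_cancel₀ hbn.ne']

theorem iterate_fract_mul_of_mem_badicCyl (hb : b ≠ 0) (hn : n ≠ 0) {w : Fin n → Fin b}
    {x : ℝ} (hx : x ∈ badicCyl b n w) :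
    (fun y : ℝ => Int.fract ((b : ℝ) * y))^[n] x = (b : ℝ) ^ n * x - badicCylIndex b n w := by
  obtain ⟨m, rfl⟩ := Nat.exists_eq_succ_of_ne_zero hn
  have hiter := iterate_fract_intCast_mul_succ (b : ℤ) m x
  simp only [Int.cast_natCast] at hiter
  rw [hiter, Int.fract,
    Int.floor_eq_iff.2 (by exact_mod_cast pow_mul_mem_Ico_of_mem_badicCyl hb hx)]
  simp

theorem badicReturnSet_subset (hb : b ≠ 0) (hn : n ≠ 0) (w : Fin n → Fin b) (r : ℝ) :
    badicReturnSet b n w r ⊆ {x | |((b : ℝ) ^ n - 1) * x - badicCylIndex b n w| < r} := by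
  rintro x ⟨hx, hret⟩
  rw [iterate_fract_mul_of_mem_badicCyl hb hn hx] at hret
  show |((b : ℝ) ^ n - 1) * x - badicCylIndex b n w| < r
  convert hret using 2
  ring

theorem ediam_badicReturnSet_le (hb : 2 ≤ b) (hn : n ≠ 0) (w : Fin n → Fin b) {r : ℝ}
    (hr : 0 ≤ r) : ediam (badicReturnSet b n w r) ≤ ENNReal.ofReal (4 * r / (b : ℝ) ^ n) := by
  have hbn : (2 : ℝ) ≤ (b : ℝ) ^ n :=
    calc (2 : ℝ) ≤ b := by exact_mod_cast hb
      _ ≤ (b : ℝ) ^ n := le_self_pow₀ (by norm_cast; omega) hn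
  calc ediam (badicReturnSet b n w r)
      ≤ ediam {x | |((b : ℝ) ^ n - 1) * x - badicCylIndex b n w| < r} :=
        ediam_mono (badicReturnSet_subset (by omega) hn w r)
    _ ≤ ENNReal.ofReal (2 * r / ((b : ℝ) ^ n - 1)) :=
        ediam_setOf_abs_mul_sub_lt_le (by linarith) _ _
    _ ≤ ENNReal.ofReal (4 * r / (b : ℝ) ^ n) := by
        gcongr ENNReal.ofReal ?_
        rw [div_le_div_iff₀ (by linarith) (by linarith)]
        nlinarith

theorem ediam_badicReturnSet_le_geometric (hb : 2 ≤ b) (t : ℝ) (w : Fin n → Fin b) :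
    ediam (badicReturnSet b n w ((b : ℝ) ^ (-(t * n)))) ≤
      4 * ENNReal.ofReal ((b : ℝ) ^ (-(1 + t))) ^ n := by
  have hb0 : (0 : ℝ) < b := by positivity
  rcases eq_or_ne n 0 with rfl | hn
  · calc ediam (badicReturnSet b 0 w ((b : ℝ) ^ (-(t * (0 : ℕ)))))
        ≤ ediam (Set.Ico (0 : ℝ) 1) := ediam_mono fun x hx => by simpa [badicCyl] using hx.1
      _ ≤ 4 * ENNReal.ofReal ((b : ℝ) ^ (-(1 + t))) ^ 0 := by simp [Real.ediam_Ico]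
  · calc ediam (badicReturnSet b n w ((b : ℝ) ^ (-(t * n))))
        ≤ ENNReal.ofReal (4 * (b : ℝ) ^ (-(t * n)) / (b : ℝ) ^ n) :=
          ediam_badicReturnSet_le hb hn w (Real.rpow_nonneg hb0.le _)
      _ = 4 * ENNReal.ofReal ((b : ℝ) ^ (-(1 + t))) ^ n := by
          rw [← ENNReal.ofReal_pow (Real.rpow_nonneg hb0.le _), ← Real.rpow_mul_natCast hb0.le,
            show -(1 + t) * n = -(t * n) - n by ring, Real.rpow_sub hb0, Real.rpow_natCast,
            mul_div_assoc, ENNReal.ofReal_mul (by norm_num)]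
          simp

end Cylinder

theorem natCast_mul_ofReal_rpow_neg_rpow_lt_one {b : ℕ} (hb : 1 < b) {t s : ℝ}
    (hs : 0 ≤ s) (hts : 1 < (1 + t) * s) :
    (b : ℝ≥0∞) * ENNReal.ofReal ((b : ℝ) ^ (-(1 + t))) ^ s < 1 := by
  have hb1 : (1 : ℝ) < b := by exact_mod_cast hb
  have hb0 : (0 : ℝ) < b := by linarith
  rw [ENNReal.ofReal_rpow_of_nonneg (Real.rpow_nonneg hb0.le _) hs, ← ENNReal.ofReal_natCast,
    ← ENNReal.ofReal_mul hb0.le, ← Real.rpow_mul hb0.le, ← Real.rpow_one_add' hb0.le,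
    ENNReal.ofReal_lt_one]
  · exact Real.rpow_lt_one_of_one_lt_of_neg hb1 (by linarith)
  · linarith

/-- For every `s > 1/(1+t)`, the `s`-dimensional Hausdorff measure of
`R₂(t)` vanishes; hence `dim_H R₂(t) ≤ 1/(1+t)`. -/
theorem badic_R2_hausdorff_upper (b : ℕ) (hb : 2 ≤ b) (t : ℝ) (ht : 0 ≤ t) :
    (∀ s : ℝ, 1 / (1 + t) < s → μH[s] (badicR2 b t) = 0) ∧
    dimH (badicR2 b t) ≤ ENNReal.ofReal (1 / (1 + t)) := by
  have hnull (s : ℝ) (hs : 1 / (1 + t) < s) : μH[s] (badicR2 b t) = 0 := by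
    have h1t : 0 < 1 + t := by linarith
    have hs0 : 0 < s := (one_div_pos.2 h1t).trans hs
    have hts : 1 < (1 + t) * s := by rwa [div_lt_iff₀' h1t] at hs
    exact hausdorffMeasure_limsup_eq_zero hs0
      (fun n w => badicReturnSet b n w ((b : ℝ) ^ (-(t * n))))
      (tsum_tsum_ediam_rpow_ne_top (fun n => by simp) ENNReal.ofNat_ne_top hs0.le
        (natCast_mul_ofReal_rpow_neg_rpow_lt_one hb hs0.le hts)
        (fun n => ediam_badicReturnSet_le_geometric hb t))
  exact ⟨hnull, dimH_le_ofReal_of_hausdorffMeasure_eq_zero hnull⟩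
end

section
/- Let T be the Gauss map on [0,1] and x ∈ I_n(a_1,...,a_n) a point in the continued-fraction cylinder of (a_1,...,a_n), with q_n = q_n(a_1,...,a_n) the denominator of the convergent [a_1,...,a_n]. Let x₀ = [(a_1,...,a_n)^∞] be the purely periodic quadratic number with period (a_1,...,a_n). If |T^n x − x| < (1/2) q_n^{-2τ} then |x − x₀| ≤ q_n^{-2(1+τ)}, where T^n x denotes the n-th iterate along the coding (a_1,...,a_n). -/
/-- The Gauss map `x ↦ {1/x}`. -/
noncomputable def gaussMap (x : ℝ) : ℝ := Int.fract x⁻¹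

/-- The `k`-th continued fraction digit of `x` (0-indexed): `a_{k+1}(x) = ⌊1/G^k x⌋`. -/
noncomputable def cfDigit (k : ℕ) (x : ℝ) : ℕ := (⌊(gaussMap^[k] x)⁻¹⌋).toNat

/-- The denominator `q_n` of the convergent `[a_1, …, a_n]`, via the continuant recursion
`q_{-1} = 0`, `q_0 = 1`, `q_k = a_k q_{k-1} + q_{k-2}`. -/
def contDenom (l : List ℕ) : ℕ :=
  (l.foldl (fun pq a => (pq.2, a * pq.2 + pq.1)) ((0 : ℕ), (1 : ℕ))).2

/-!
Write `M = continuantMatrix (a₁, …, aₙ) = !![q_n, q_{n-1}; p_n, p_{n-1}]`. On the cylinder, `T^n` is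
inverted by the Möbius map `t ↦ (p_n + p_{n-1} t) / (q_n + q_{n-1} t)`, whose determinant is `±1`.
Hence for `x` and the fixed point `x₀` of the cylinder,
`(q_n + q_{n-1} T^n x) (q_n + q_{n-1} x₀) |x - x₀| = |T^n x - x₀|`, and the left factor is at least
`q_n²` (this is the derivative bound `|(T^n)'| ≥ q_n²`). The triangle inequality through `x` gives
`(q_n² - 1) |x - x₀| ≤ |T^n x - x|`, and `q_n² - 1 ≥ q_n² / 2` unless `q_n = 1`, where the claim
is `|x - x₀| ≤ 1`.
-/

open Matrix

def cfMatrix (a : ℕ) : Matrix (Fin 2) (Fin 2) ℝ := !![(a : ℝ), 1; 1, 0]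

def continuantMatrix (l : List ℕ) : Matrix (Fin 2) (Fin 2) ℝ := (l.map cfMatrix).prod

def cfCylinder (l : List ℕ) : Set ℝ := {y | ∀ k (hk : k < l.length), cfDigit k y = l[k]}

@[simp]
lemma continuantMatrix_nil : continuantMatrix [] = 1 := rfl

lemma continuantMatrix_cons (a : ℕ) (l : List ℕ) :
    continuantMatrix (a :: l) = cfMatrix a * continuantMatrix l := rfl

lemma continuantMatrix_append_singleton (l : List ℕ) (a : ℕ) :
    continuantMatrix (l ++ [a]) = continuantMatrix l * cfMatrix a := by
  simp [continuantMatrix]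

lemma det_continuantMatrix (l : List ℕ) : (continuantMatrix l).det = (-1) ^ l.length := by
  induction l with
  | nil => simp
  | cons a l ih =>
    rw [continuantMatrix_cons, det_mul, ih, cfMatrix, det_fin_two_of, List.length_cons, pow_succ]
    ring

lemma continuantMatrix_nonneg (l : List ℕ) (i j : Fin 2) : 0 ≤ continuantMatrix l i j := by
  induction l generalizing i with
  | nil => rw [continuantMatrix_nil, one_apply]; split_ifs <;> norm_num
  | cons a l ih =>
    rw [continuantMatrix_cons, mul_apply]
    refine Finset.sum_nonneg fun k _ => mul_nonneg ?_ (ih k)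
    fin_cases i <;> fin_cases k <;> simp [cfMatrix]

lemma one_le_continuantMatrix_zero_zero {l : List ℕ} (hl : ∀ b ∈ l, 1 ≤ b) :
    1 ≤ continuantMatrix l 0 0 := by
  induction l with
  | nil => simp
  | cons a l ih =>
    have ha : (1 : ℝ) ≤ a := by exact_mod_cast hl a List.mem_cons_self
    have hq := ih fun b hb => hl b (List.mem_cons_of_mem a hb)
    have hp := continuantMatrix_nonneg l 1 0
    simp only [continuantMatrix_cons, cfMatrix, mul_apply, Fin.sum_univ_two, of_apply, cons_val',
      cons_val_fin_one, cons_val_zero, cons_val_one, one_mul]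
    nlinarith

lemma contDenom_eq_continuantMatrix (l : List ℕ) : (contDenom l : ℝ) = continuantMatrix l 0 0 := by
  suffices h : ∀ l : List ℕ,
      let r := l.foldl (fun pq a => (pq.2, a * pq.2 + pq.1)) ((0 : ℕ), (1 : ℕ))
      (r.1 : ℝ) = continuantMatrix l 0 1 ∧ (r.2 : ℝ) = continuantMatrix l 0 0 from (h l).2
  intro l
  induction l using List.reverseRecOn with
  | nil => simp
  | append_singleton l a ih =>
    simp only [List.foldl_append, List.foldl_cons, List.foldl_nil,
      continuantMatrix_append_singleton, mul_apply, Fin.sum_univ_two, cfMatrix, of_apply, cons_val',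
      cons_val_zero, cons_val_one, cons_val_fin_one, mul_one, mul_zero, add_zero]
    refine ⟨ih.2, ?_⟩
    push_cast
    rw [ih.1, ih.2]
    ring

lemma mul_add_gaussMap_eq_one {y : ℝ} {a : ℕ} (ha : 1 ≤ a) (hy : cfDigit 0 y = a) :
    y * (a + gaussMap y) = 1 := by
  have hfloor : ⌊y⁻¹⌋ = a := by simp only [cfDigit, Function.iterate_zero, id] at hy; omega
  have hy0 : y ≠ 0 := by rintro rfl; simp at hfloor; omega
  rw [gaussMap, Int.fract, hfloor, Int.cast_natCast, add_sub_cancel, mul_inv_cancel₀ hy0]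

lemma gaussMap_mem_cfCylinder {y : ℝ} {a : ℕ} {l : List ℕ} (hy : y ∈ cfCylinder (a :: l)) :
    gaussMap y ∈ cfCylinder l := fun k hk => hy (k + 1) (by simpa using hk)

lemma mem_cfCylinder_ofFn {n : ℕ} {a : Fin n → ℕ} {y : ℝ} :
    y ∈ cfCylinder (List.ofFn a) ↔ ∀ k : Fin n, cfDigit k y = a k := by
  simp [cfCylinder, Fin.forall_iff]

lemma gaussMap_iterate_nonneg {y : ℝ} (hy : 0 ≤ y) (n : ℕ) : 0 ≤ gaussMap^[n] y := by
  cases n with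
  | zero => exact hy
  | succ n => rw [Function.iterate_succ_apply']; exact Int.fract_nonneg _

lemma mul_continuantMatrix_eq {l : List ℕ} (hl : ∀ b ∈ l, 1 ≤ b) {y : ℝ} (hy : y ∈ cfCylinder l) :
    y * (continuantMatrix l 0 0 + continuantMatrix l 0 1 * gaussMap^[l.length] y) =
      continuantMatrix l 1 0 + continuantMatrix l 1 1 * gaussMap^[l.length] y := by
  induction l generalizing y with
  | nil => simp
  | cons a l ih =>
    have hstep := mul_add_gaussMap_eq_one (hl a List.mem_cons_self) (hy 0 (by simp))
    have hrest := ih (fun b hb => hl b (List.mem_cons_of_mem a hb)) (gaussMap_mem_cfCylinder hy)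
    simp only [continuantMatrix_cons, mul_apply, Fin.sum_univ_two, cfMatrix, of_apply, cons_val',
      cons_val_zero, cons_val_one, cons_val_fin_one, one_mul, zero_mul, add_zero, List.length_cons,
      Function.iterate_succ_apply]
    set t := gaussMap^[l.length] (gaussMap y)
    linear_combination (continuantMatrix l 0 0 + continuantMatrix l 0 1 * t) * hstep - y * hrest

lemma sq_mul_abs_sub_le_of_mobius {M : Matrix (Fin 2) (Fin 2) ℝ} (hdet : |M.det| = 1)
    (h00 : 0 ≤ M 0 0) (h01 : 0 ≤ M 0 1) {x y s t : ℝ} (hs : 0 ≤ s) (ht : 0 ≤ t)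
    (hx : x * (M 0 0 + M 0 1 * s) = M 1 0 + M 1 1 * s)
    (hy : y * (M 0 0 + M 0 1 * t) = M 1 0 + M 1 1 * t) :
    M 0 0 ^ 2 * |x - y| ≤ |s - t| := by
  have hP : M 0 0 ≤ M 0 0 + M 0 1 * s := le_add_of_nonneg_right (mul_nonneg h01 hs)
  have hQ : M 0 0 ≤ M 0 0 + M 0 1 * t := le_add_of_nonneg_right (mul_nonneg h01 ht)
  have hcross : (M 0 0 + M 0 1 * s) * (M 0 0 + M 0 1 * t) * (x - y) = M.det * (s - t) := by
    rw [det_fin_two]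
    linear_combination (M 0 0 + M 0 1 * t) * hx - (M 0 0 + M 0 1 * s) * hy
  calc M 0 0 ^ 2 * |x - y| ≤ (M 0 0 + M 0 1 * s) * (M 0 0 + M 0 1 * t) * |x - y| := by
        gcongr
        rw [sq]
        exact mul_le_mul hP hQ h00 (h00.trans hP)
    _ = |s - t| := by
        rw [← abs_of_nonneg (mul_nonneg (h00.trans hP) (h00.trans hQ)), ← abs_mul, hcross,
          abs_mul, hdet, one_mul]

lemma le_rpow_of_sq_mul_le {q : ℕ} (hq : 1 ≤ q) {d e τ : ℝ} (hd0 : 0 ≤ d) (hd1 : d ≤ 1)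
    (hd : (q : ℝ) ^ 2 * d ≤ e + d) (he : e < 1 / 2 * (q : ℝ) ^ (-(2 * τ))) :
    d ≤ (q : ℝ) ^ (-(2 * (1 + τ))) := by
  obtain rfl | hq2 := hq.eq_or_lt
  · simpa using hd1
  have hq2 : (2 : ℝ) ≤ q := by exact_mod_cast hq2
  have hq0 : (0 : ℝ) < q := by linarith
  rw [show -(2 * (1 + τ)) = -(2 * τ) - 2 by ring, Real.rpow_sub hq0, Real.rpow_two,
    le_div_iff₀ (by positivity)]
  have hq4 : (2 : ℝ) ≤ (q : ℝ) ^ 2 := by nlinarith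
  nlinarith [mul_nonneg (sub_nonneg.2 hq4) hd0]

theorem cf_periodic_approximation_general (n : ℕ) (a : Fin n → ℕ)
    (ha : ∀ k, 1 ≤ a k) (τ : ℝ) (x x₀ : ℝ)
    (hx : x ∈ Set.Ioo (0 : ℝ) 1 ∧ ∀ k : Fin n, cfDigit k x = a k)
    (hx₀mem : x₀ ∈ Set.Ioo (0 : ℝ) 1 ∧ ∀ k : Fin n, cfDigit k x₀ = a k)
    (hx₀per : gaussMap^[n] x₀ = x₀)
    (h : |gaussMap^[n] x - x| <
      (1 / 2) * (contDenom (List.ofFn a) : ℝ) ^ (-(2 * τ))) :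
    |x - x₀| ≤ (contDenom (List.ofFn a) : ℝ) ^ (-(2 * (1 + τ))) := by
  obtain ⟨⟨hx0, hx1⟩, hxa⟩ := hx
  obtain ⟨⟨hx₀0, hx₀1⟩, hx₀a⟩ := hx₀mem
  set l := List.ofFn a
  have hl : ∀ b ∈ l, 1 ≤ b := by simpa [l, List.mem_ofFn] using ha
  have hlen : l.length = n := List.length_ofFn
  have hxM := mul_continuantMatrix_eq hl (mem_cfCylinder_ofFn.2 hxa)
  have hx₀M := mul_continuantMatrix_eq hl (mem_cfCylinder_ofFn.2 hx₀a)
  rw [hlen] at hxM hx₀M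
  rw [hx₀per] at hx₀M
  have hcontract := sq_mul_abs_sub_le_of_mobius (by simp [det_continuantMatrix])
    (continuantMatrix_nonneg l 0 0) (continuantMatrix_nonneg l 0 1)
    (gaussMap_iterate_nonneg hx0.le n) hx₀0.le hxM hx₀M
  rw [← contDenom_eq_continuantMatrix] at hcontract
  have hq : 1 ≤ contDenom l := by
    have := one_le_continuantMatrix_zero_zero hl
    rwa [← contDenom_eq_continuantMatrix, Nat.one_le_cast] at this
  refine le_rpow_of_sq_mul_le hq (abs_nonneg _) ?_ ?_ h
  · rw [abs_le]; constructor <;> linarith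
  · exact hcontract.trans (abs_sub_le _ x _)

/-- Let `x` be in the continued-fraction cylinder `I_n(a_1,…,a_n)` of the Gauss
map `T`, `q_n` the denominator of `[a_1,…,a_n]`, and `x₀ = [(a_1,…,a_n)^∞]` the purely
periodic point of the cylinder. If `|T^n x − x| < (1/2) q_n^{-2τ}` then
`|x − x₀| ≤ q_n^{-2(1+τ)}`. -/
theorem cf_periodic_approximation (n : ℕ) (hn : 1 ≤ n) (a : Fin n → ℕ)
    (ha : ∀ k, 1 ≤ a k) (τ : ℝ) (x x₀ : ℝ)
    (hx : x ∈ Set.Ioo (0 : ℝ) 1 ∧ ∀ k : Fin n, cfDigit k x = a k)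
    (hx₀mem : x₀ ∈ Set.Ioo (0 : ℝ) 1 ∧ ∀ k : Fin n, cfDigit k x₀ = a k)
    (hx₀per : gaussMap^[n] x₀ = x₀)
    (h : |gaussMap^[n] x - x| <
      (1 / 2) * (contDenom (List.ofFn a) : ℝ) ^ (-(2 * τ))) :
    |x - x₀| ≤ (contDenom (List.ofFn a) : ℝ) ^ (-(2 * (1 + τ))) :=
  cf_periodic_approximation_general n a ha τ x x₀ hx hx₀mem hx₀per h
end

section
/- Fix t > 0 and a probability-like weight system: for each word w of length m over a finite alphabet Λ, let α_w > 0 with Σ_{w∈Λ^m} α_w^{s_m} = 1 defining s_m uniquely (assuming all α_w < 1). If Γ ⊆ Λ^m satisfies Σ_{w∈Γ} α_w^{s_m} ≥ η̃ for some η̃ ∈ (0,1], and s_Γ is the unique solution of Σ_{w∈Γ} α_w^{s} = 1, then 0 ≤ s_m − s_Γ and max_{w∈Γ} α_w^{s_m − s_Γ} ≥ η̃. -/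
/-- Let `α_w ∈ (0,1)` be weights on the words of length `m` over a finite
alphabet `Λ`, `s_m` the solution of `Σ_{w ∈ Λ^m} α_w^{s_m} = 1`, and `Γ ⊆ Λ^m` a
subfamily with `Σ_{w ∈ Γ} α_w^{s_m} ≥ η̃` for some `η̃ ∈ (0,1]`. If `s_Γ` solves
`Σ_{w ∈ Γ} α_w^{s_Γ} = 1`, then `0 ≤ s_m − s_Γ` and `max_{w ∈ Γ} α_w^{s_m − s_Γ} ≥ η̃`. -/
theorem restricted_pressure_root_comparison {Λ : Type*} [Fintype Λ] (m : ℕ)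
    (α : (Fin m → Λ) → ℝ) (hα : ∀ w, 0 < α w ∧ α w < 1)
    (sm : ℝ) (hsm : ∑ w : Fin m → Λ, α w ^ sm = 1)
    (Γ : Finset (Fin m → Λ)) (η : ℝ) (hη0 : 0 < η) (hη1 : η ≤ 1)
    (hΓ : η ≤ ∑ w ∈ Γ, α w ^ sm)
    (sΓ : ℝ) (hsΓ : ∑ w ∈ Γ, α w ^ sΓ = 1) :
    0 ≤ sm - sΓ ∧ ∃ w ∈ Γ, η ≤ α w ^ (sm - sΓ) := by
  have hΓne : Γ.Nonempty := by
    rcases Γ.eq_empty_or_nonempty with h | h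
    · simp [h] at hsΓ
    · exact h
  have hle : sΓ ≤ sm := by
    by_contra hlt
    push_neg at hlt
    have h1 : ∑ w ∈ Γ, α w ^ sΓ < ∑ w ∈ Γ, α w ^ sm :=
      Finset.sum_lt_sum_of_nonempty hΓne fun w _ =>
        Real.rpow_lt_rpow_of_exponent_gt (hα w).1 (hα w).2 hlt
    have h2 : ∑ w ∈ Γ, α w ^ sm ≤ 1 := by
      rw [← hsm]
      exact Finset.sum_le_sum_of_subset_of_nonneg (Finset.subset_univ Γ)
        fun w _ _ => (Real.rpow_pos_of_pos (hα w).1 sm).le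
    rw [hsΓ] at h1
    linarith
  refine ⟨by linarith, ?_⟩
  by_contra hc
  push_neg at hc
  have hlt : ∑ w ∈ Γ, α w ^ sm < η := by
    calc ∑ w ∈ Γ, α w ^ sm = ∑ w ∈ Γ, α w ^ sΓ * α w ^ (sm - sΓ) := by
          refine Finset.sum_congr rfl fun w _ => ?_
          rw [← Real.rpow_add (hα w).1]
          congr 1
          ring
      _ < ∑ w ∈ Γ, α w ^ sΓ * η :=
          Finset.sum_lt_sum_of_nonempty hΓne fun w hw =>
            mul_lt_mul_of_pos_left (hc w hw) (Real.rpow_pos_of_pos (hα w).1 sΓ)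
      _ = η := by rw [← Finset.sum_mul, hsΓ, one_mul]
  linarith
end
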